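/- An orientation-preserving homeomorphism f of ℝ² that is topologically conjugate to the translation T(x) = x + e₁ does not have the topological shadowing property. -/

import Mathlib

open Metric Filter Topology

/-- `n`-fold composition of a homeomorphism, `n : ℕ`. -/
def hpow {X : Type*} [TopologicalSpace X] (f : X ≃ₜ X) : ℕ → X ≃ₜ X
  | 0 => Homeomorph.refl X
  | n + 1 => (hpow f n).trans f

/-- `n`-th iterate of a homeomorphism, `n : ℤ` (negative powers use the inverse). -/
def hzpow {X : Type*} [TopologicalSpace X] (f : X ≃ₜ X) : ℤ → X ≃ₜ X
  | Int.ofNat n => hpow f n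
  | Int.negSucc n => (hpow f (n + 1)).symm

/-- `(xₙ)ₙ∈ℤ` is a `δ`-pseudo-orbit for `f`: `d(f(xₙ), xₙ₊₁) < δ(f(xₙ))` for all `n`. -/
def IsPseudoOrbit {X : Type*} [MetricSpace X] (f : X → X) (δ : X → ℝ) (x : ℤ → X) : Prop :=
  ∀ n : ℤ, dist (f (x n)) (x (n + 1)) < δ (f (x n))

/-- Topological shadowing property (strict shadowing inequality). -/
def TSP {X : Type*} [MetricSpace X] (f : X ≃ₜ X) : Prop :=
  ∀ ε : X → ℝ, Continuous ε → (∀ p, 0 < ε p) →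
    ∃ δ : X → ℝ, Continuous δ ∧ (∀ p, 0 < δ p) ∧
      ∀ x : ℤ → X, IsPseudoOrbit f δ x →
        ∃ y : X, ∀ n : ℤ, dist (hzpow f n y) (x n) < ε (x n)

/-- `f` is orientation preserving: it is isotopic to the identity (an equivalent
characterization of orientation preservation for homeomorphisms of the plane). -/
def OrientationPreserving (f : ℂ ≃ₜ ℂ) : Prop :=
  ∃ H : ℝ → ℂ → ℂ, Continuous (fun p : ℝ × ℂ => H p.1 p.2) ∧
    (∀ t : ℝ, IsHomeomorph (H t)) ∧ H 0 = f ∧ H 1 = id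

/-! Topological shadowing is invariant under conjugacy: the continuous gauges `ε` and `δ` are
carried through `h` and `h⁻¹` by continuous moduli of continuity, which a partition of unity
provides. A translation `z ↦ z + v`, `v ≠ 0`, does not shadow: take the gauge `exp (-‖p‖)`,
which tends to `0` at infinity, and the orbit `n • v` of `0` with a single jump `c` between
times `0` and `1`. A shadowing point would then be `0`, seen from the far past, and `c`, seen
from the far future. -/

theorem hpow_apply {X : Type*} [TopologicalSpace X] (f : X ≃ₜ X) (n : ℕ) (x : X) :
    hpow f n x = f^[n] x := by
  induction n with
  | zero => rfl
  | succ n ih => rw [Function.iterate_succ_apply', ← ih]; rfl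

theorem Function.Semiconj.hzpow {X Y : Type*} [TopologicalSpace X] [TopologicalSpace Y]
    {h : X → Y} {f : X ≃ₜ X} {g : Y ≃ₜ Y} (hsc : Function.Semiconj h f g) (n : ℤ) :
    Function.Semiconj h (hzpow f n) (hzpow g n) := by
  have hpow_semiconj (m : ℕ) : Function.Semiconj h (hpow f m) (hpow g m) := by
    simpa only [Function.Semiconj, hpow_apply] using hsc.iterate_right m
  cases n with
  | ofNat m => exact hpow_semiconj m
  | negSucc m =>
    exact (hpow_semiconj (m + 1)).inverses_right (hpow f (m + 1)).right_inv
      (hpow g (m + 1)).left_inv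

theorem hzpow_addRight_apply {G : Type*} [TopologicalSpace G] [AddGroup G]
    [SeparatelyContinuousAdd G] (v : G) (n : ℤ) (y : G) :
    hzpow (Homeomorph.addRight v) n y = y + n • v := by
  have hpow_addRight (m : ℕ) (y : G) : hpow (Homeomorph.addRight v) m y = y + m • v := by
    rw [hpow_apply, Homeomorph.coe_addRight, add_right_iterate]
  cases n with
  | ofNat m => exact (hpow_addRight m y).trans (by rw [Int.ofNat_eq_natCast, natCast_zsmul])
  | negSucc m =>
    rw [hzpow, Homeomorph.symm_apply_eq, hpow_addRight, negSucc_zsmul, neg_add_cancel_right]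

theorem Continuous.exists_continuous_pos_modulus {X Y : Type*} [MetricSpace X]
    [PseudoMetricSpace Y] {h : X → Y} (hh : Continuous h) {r : X → ℝ} (hr : Continuous r)
    (hr_pos : ∀ p, 0 < r p) :
    ∃ ε : X → ℝ, Continuous ε ∧ (∀ p, 0 < ε p) ∧
      ∀ p q, dist q p < ε p → dist (h q) (h p) < r p := by
  set t : X → Set ℝ := fun p => {c | 0 < c ∧ ∀ q, dist q p < c → dist (h q) (h p) < r p}
  have ht_convex (p : X) : Convex ℝ (t p) := by
    refine (convex_iff_ordConnected).mpr ⟨fun c₁ hc₁ c₂ hc₂ c hc => ?_⟩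
    exact ⟨hc₁.1.trans_le hc.1, fun q hq => hc₂.2 q (hq.trans_le hc.2)⟩
  -- If `h (ball p c) ⊆ ball (h p) (r p / 4)`, the radius `c / 2` works at every `y` of
  -- `ball p (c / 2)` with `r y > r p / 2`.
  have ht_local (p : X) : ∃ c, ∀ᶠ y in 𝓝 p, c ∈ t y := by
    obtain ⟨c, hc_pos, hc⟩ := Metric.continuous_iff.mp hh p (r p / 4) (by linarith [hr_pos p])
    have hr_near : ∀ᶠ y in 𝓝 p, r p / 2 < r y :=
      hr.continuousAt.eventually_const_lt (by linarith [hr_pos p])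
    refine ⟨c / 2, ?_⟩
    filter_upwards [hr_near, ball_mem_nhds p (half_pos hc_pos)] with y hry hy
    refine ⟨half_pos hc_pos, fun q hq => ?_⟩
    have hyp : dist y p < c / 2 := mem_ball.mp hy
    have hqp : dist q p < c := by linarith [dist_triangle q y p]
    calc dist (h q) (h y) ≤ dist (h q) (h p) + dist (h y) (h p) := dist_triangle_right _ _ _
      _ < r p / 4 + r p / 4 := add_lt_add (hc q hqp) (hc y (by linarith))
      _ < r y := by linarith
  obtain ⟨ε, hε⟩ := exists_continuous_forall_mem_convex_of_local_const ht_convex ht_local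
  exact ⟨ε, ε.continuous, fun p => (hε p).1, fun p q => (hε p).2 q⟩

theorem TSP.of_semiconj {X Y : Type*} [MetricSpace X] [MetricSpace Y] {f : X ≃ₜ X}
    {g : Y ≃ₜ Y} (hf : TSP f) (h : X ≃ₜ Y) (hsc : Function.Semiconj h f g) : TSP g := by
  intro εg hεg hεg_pos
  obtain ⟨εf, hεf, hεf_pos, hεf_mod⟩ :=
    h.continuous.exists_continuous_pos_modulus (hεg.comp h.continuous) fun p => hεg_pos (h p)
  obtain ⟨δf, hδf, hδf_pos, hshadow⟩ := hf εf hεf hεf_pos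
  obtain ⟨δg, hδg, hδg_pos, hδg_mod⟩ := h.symm.continuous.exists_continuous_pos_modulus
    (hδf.comp h.symm.continuous) fun p => hδf_pos (h.symm p)
  refine ⟨δg, hδg, hδg_pos, fun x hx => ?_⟩
  have hf_symm (p : Y) : f (h.symm p) = h.symm (g p) := by
    rw [Homeomorph.eq_symm_apply, hsc, Homeomorph.apply_symm_apply]
  have hx' : IsPseudoOrbit f δf (h.symm ∘ x) := fun n => by
    rw [Function.comp_apply, Function.comp_apply, hf_symm, dist_comm]
    exact hδg_mod _ _ (by rw [dist_comm]; exact hx n)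
  obtain ⟨y, hy⟩ := hshadow _ hx'
  refine ⟨h y, fun n => ?_⟩
  simpa only [← hsc.hzpow n y, Function.comp_apply, Homeomorph.apply_symm_apply] using
    hεf_mod _ _ (hy n)

theorem tendsto_norm_zsmul_add_cofinite_atTop {E : Type*} [NormedAddCommGroup E]
    [NormedSpace ℝ E] {v : E} (hv : v ≠ 0) (c : E) :
    Tendsto (fun n : ℤ => ‖n • v + c‖) cofinite atTop := by
  have habs : Tendsto (fun n : ℤ => ‖(n : ℝ)‖) cofinite atTop := by
    rw [Int.cofinite_eq]
    exact tendsto_norm_cobounded_atTop.comp tendsto_intCast_atBot_sup_atTop_cobounded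
  refine tendsto_atTop_mono (fun n => ?_) (tendsto_atTop_add_const_right _ (-‖c‖)
    (habs.atTop_mul_const (norm_pos_iff.mpr hv)))
  have hle := norm_sub_le (n • v + c) c
  rw [add_sub_cancel_right, norm_zsmul ℝ] at hle
  linarith

theorem not_TSP_addRight {E : Type*} [NormedAddCommGroup E] [NormedSpace ℝ E] {v : E}
    (hv : v ≠ 0) : ¬ TSP (Homeomorph.addRight v) := by
  intro hT
  obtain ⟨δ, -, hδ_pos, hshadow⟩ :=
    hT (fun p => Real.exp (-‖p‖)) (by fun_prop) fun p => Real.exp_pos _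
  have : Nontrivial E := nontrivial_of_ne v 0 hv
  obtain ⟨c, hc⟩ := exists_norm_eq E (half_pos (hδ_pos v)).le
  have hc_lt : ‖c‖ < δ v := hc ▸ half_lt_self (hδ_pos v)
  set x : ℤ → E := fun n => n • v + if 0 < n then c else 0
  have hx : IsPseudoOrbit (Homeomorph.addRight v) δ x := by
    intro n
    rcases eq_or_ne n 0 with rfl | hn
    · simpa [x, dist_eq_norm] using hc_lt
    · have : x n + v = x (n + 1) := by
        simp only [x, add_zsmul, one_zsmul, show 0 < n + 1 ↔ 0 < n by omega]
        abel
      simpa [this] using hδ_pos _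
  obtain ⟨y, hy⟩ := hshadow x hx
  have hy_diff (n : ℤ) : ‖y - if 0 < n then c else 0‖ < Real.exp (-‖x n‖) := by
    simpa [hzpow_addRight_apply, x, dist_eq_norm, add_sub_add_comm] using hy n
  have hlim (c' : E) : Tendsto (fun n : ℤ => Real.exp (-‖n • v + c'‖)) cofinite (𝓝 0) :=
    Real.tendsto_exp_neg_atTop_nhds_zero.comp (tendsto_norm_zsmul_add_cofinite_atTop hv c')
  have hy_zero : ‖y‖ ≤ 0 := by
    refine ge_of_tendsto ((hlim 0).mono_left atBot_le_cofinite) ?_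
    filter_upwards [eventually_le_atBot 0] with n hn
    simpa [x, not_lt.mpr hn] using (hy_diff n).le
  have hy_c : ‖y - c‖ ≤ 0 := by
    refine ge_of_tendsto ((hlim c).mono_left atTop_le_cofinite) ?_
    filter_upwards [eventually_gt_atTop 0] with n hn
    simpa [x, hn] using (hy_diff n).le
  rw [norm_le_zero_iff.mp hy_zero, zero_sub, norm_neg, hc] at hy_c
  linarith [hδ_pos v]

theorem conjugate_to_translation_not_TSP_general (f : ℂ ≃ₜ ℂ)
    (h : ℂ ≃ₜ ℂ)
    (hconj : ∀ z : ℂ, h (f z) = h z + 1) : ¬ TSP f :=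
  fun hf => not_TSP_addRight one_ne_zero (hf.of_semiconj h hconj)

/-- An orientation preserving homeomorphism of the plane which is topologically conjugate
to the translation `z ↦ z + 1` does not have the topological shadowing property. -/
theorem conjugate_to_translation_not_TSP (f : ℂ ≃ₜ ℂ)
    (hor : OrientationPreserving f) (h : ℂ ≃ₜ ℂ)
    (hconj : ∀ z : ℂ, h (f z) = h z + 1) : ¬ TSP f :=
  conjugate_to_translation_not_TSP_general f h hconj
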